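/- arXiv:0803.1950 — 5 statements merged into one kernel-verified Lean document; each statement's English description precedes it below -/
import Mathlib

section
/- Let $(f_j)$ be a sequence of concave differentiable functions on $\mathbb{R}$ and $g$ a function on $\mathbb{R}$ differentiable at $0$, such that $\liminf_{j\to\infty} f_j(t) \ge g(t)$ for every $t \in \mathbb{R}$ and $\lim_{j\to\infty} f_j(0) = g(0)$. Then $\lim_{j\to\infty} f_j'(0) = g'(0)$. -/
/-!
Concavity puts each `f j` below its tangent line at `0`: `f j t ≤ f j 0 + f' j * t`. Together with
`liminf f j ≥ g` and `f j 0 → g 0` this gives, for fixed `h > 0` and all large `j`,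
`g (±h) - g 0 - 2ε ≤ ± f' j * h`. Comparing with the first-order expansion of `g` at `0` at the
points `±h` squeezes `f' j` into a small interval around `g'`.
-/

open Filter Topology Set

theorem ConcaveOn.le_add_mul_sub_of_hasDerivAt {S : Set ℝ} {f : ℝ → ℝ} {f' x y : ℝ}
    (hf : ConcaveOn ℝ S f) (hx : x ∈ S) (hy : y ∈ S) (hd : HasDerivAt f f' x) :
    f y ≤ f x + f' * (y - x) := by
  rcases lt_trichotomy y x with hyx | rfl | hxy
  · have h := hf.le_slope_of_hasDerivAt hy hx hyx hd
    rw [slope_def_field, le_div_iff₀ (sub_pos.2 hyx)] at h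
    linarith
  · simp
  · have h := hf.slope_le_of_hasDerivAt hx hy hxy hd
    rw [slope_def_field, div_le_iff₀ (sub_pos.2 hxy)] at h
    linarith

section Supergradient

variable {ι : Type*} {l : Filter ι} {f : ι → ℝ → ℝ} {g : ℝ → ℝ} {d : ι → ℝ} {x : ℝ}

lemma eventually_sub_le_supergradient_mul (hsup : ∀ j t, f j t ≤ f j x + d j * (t - x))
    (hliminf : ∀ t, ∀ ε > 0, ∀ᶠ j in l, g t - ε ≤ f j t)
    (hlim : Tendsto (fun j => f j x) l (𝓝 (g x))) (s : ℝ) {ε : ℝ} (hε : 0 < ε) :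
    ∀ᶠ j in l, g (x + s) - g x - 2 * ε ≤ d j * s := by
  filter_upwards [hliminf (x + s) ε hε,
    hlim.eventually (eventually_lt_nhds (lt_add_of_pos_right (g x) hε))] with j hfs hfx
  have htangent := hsup j (x + s)
  rw [add_sub_cancel_left] at htangent
  linarith

theorem tendsto_supergradient_of_liminf_ge {g' : ℝ}
    (hsup : ∀ j t, f j t ≤ f j x + d j * (t - x)) (hg : HasDerivAt g g' x)
    (hliminf : ∀ t, ∀ ε > 0, ∀ᶠ j in l, g t - ε ≤ f j t)
    (hlim : Tendsto (fun j => f j x) l (𝓝 (g x))) : Tendsto d l (𝓝 g') := by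
  rw [Metric.tendsto_nhds]
  intro η hη
  have hη4 : 0 < η / 4 := by positivity
  have hexpand : ∀ᶠ s in 𝓝 (0 : ℝ), |g (x + s) - g x - s * g'| ≤ η / 4 * |s| :=
    (hasDerivAt_iff_isLittleO_nhds_zero.1 hg).def hη4
  obtain ⟨h, ⟨hexpand_pos, hexpand_neg⟩, hh⟩ : ∃ h : ℝ,
      (|g (x + h) - g x - h * g'| ≤ η / 4 * |h| ∧
        |g (x + -h) - g x - -h * g'| ≤ η / 4 * |-h|) ∧ 0 < h :=
    (((hexpand.and ((continuous_neg.tendsto' 0 0 neg_zero).eventually hexpand)).filter_mono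
      nhdsWithin_le_nhds).and (self_mem_nhdsWithin (s := Ioi 0))).exists
  rw [abs_of_pos hh] at hexpand_pos
  rw [abs_neg, abs_of_pos hh] at hexpand_neg
  have hεh : 0 < η / 4 * h := by positivity
  filter_upwards [eventually_sub_le_supergradient_mul hsup hliminf hlim h hεh,
    eventually_sub_le_supergradient_mul hsup hliminf hlim (-h) hεh] with j hj_pos hj_neg
  have hlower : (g' - d j) * h ≤ 3 * (η / 4) * h := by linarith [(abs_le.1 hexpand_pos).1]
  have hupper : (d j - g') * h ≤ 3 * (η / 4) * h := by linarith [(abs_le.1 hexpand_neg).1]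
  rw [Real.dist_eq, abs_sub_lt_iff]
  constructor <;> nlinarith

end Supergradient

/-- If `f j` are concave functions on `ℝ`, each differentiable at `0` with derivative `f' j`,
`g` is differentiable at `0` with derivative `g'`, `liminf_j f j t ≥ g t` for every `t`, and
`f j 0 → g 0`, then `f' j → g'`. -/
theorem stmt_0 (f : ℕ → ℝ → ℝ) (g : ℝ → ℝ) (f' : ℕ → ℝ) (g' : ℝ)
    (hconc : ∀ j, ConcaveOn ℝ Set.univ (f j))
    (hderiv : ∀ j, HasDerivAt (f j) (f' j) 0)
    (hg : HasDerivAt g g' 0)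
    (hliminf : ∀ t : ℝ, ∀ ε > (0 : ℝ), ∀ᶠ j in atTop, g t - ε ≤ f j t)
    (hlim0 : Tendsto (fun j => f j 0) atTop (𝓝 (g 0))) :
    Tendsto f' atTop (𝓝 g') :=
  tendsto_supergradient_of_liminf_ge
    (fun j t => (hconc j).le_add_mul_sub_of_hasDerivAt (mem_univ 0) (mem_univ t) (hderiv j))
    hg hliminf hlim0
end

section
/- Let $(\Omega, \mu)$ be a probability space, $V$ an $N$-dimensional subspace of $L^2(\mu, \mathbb{C})$, and $s_1, \dots, s_N \in V$. Then $\int_{\Omega^N} |\det(s_i(x_j))_{i,j}|^2 \, d\mu(x_1) \cdots d\mu(x_N) = N! \, \det\big( \langle s_i, s_j \rangle_{L^2(\mu)} \big)_{i,j}$. -/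
/-!
Expanding both determinants over permutations turns `det (f i (x j)) * det (g i (x j))` into a
signed double sum of products `∏ j, f (σ j) (x j) * g (τ j) (x j)`, each depending on a single
coordinate per factor, so Fubini integrates it to `∏ j, ∫ f (σ j) * g (τ j) dμ`. Substituting
`τ = ρ * σ` makes every one of the `N!` inner sums over `τ` equal to `det (∫ f i * g j dμ)`
(Andréief's identity). Taking `g i = conj ∘ f i` gives the theorem.
-/

open MeasureTheory Finset

section Algebra

variable {ι R : Type*} [Fintype ι] [DecidableEq ι] [CommRing R]

theorem Matrix.det_mul_det_eq_sum_sum_sign_prod (M M' : Matrix ι ι R) :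
    M.det * M'.det = ∑ σ : Equiv.Perm ι, ∑ τ : Equiv.Perm ι,
      ((σ.sign : ℤ) : R) * ((τ.sign : ℤ) : R) * ∏ j, M (σ j) j * M' (τ j) j := by
  rw [Matrix.det_apply', Matrix.det_apply', sum_mul_sum]
  refine sum_congr rfl fun σ _ => sum_congr rfl fun τ _ => ?_
  rw [prod_mul_distrib]
  ring

theorem Matrix.sum_sum_sign_prod_eq_factorial_mul_det (A : Matrix ι ι R) :
    ∑ σ : Equiv.Perm ι, ∑ τ : Equiv.Perm ι,
      ((σ.sign : ℤ) : R) * ((τ.sign : ℤ) : R) * ∏ j, A (σ j) (τ j) =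
      (Fintype.card ι).factorial * A.det := by
  have inner (σ : Equiv.Perm ι) : ∑ τ : Equiv.Perm ι,
      ((σ.sign : ℤ) : R) * ((τ.sign : ℤ) : R) * ∏ j, A (σ j) (τ j) = A.det := by
    rw [← A.det_transpose, Matrix.det_apply', ← Equiv.sum_comp (Equiv.mulRight σ)]
    refine sum_congr rfl fun ρ _ => ?_
    have hprod : ∏ j, A (σ j) (ρ (σ j)) = ∏ k, A k (ρ k) :=
      Equiv.prod_comp σ fun k => A k (ρ k)
    have hsign : ((σ.sign : ℤ) : R) * ((σ.sign : ℤ) : R) = 1 := by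
      rw [← Int.cast_mul, ← Units.val_mul, Int.units_mul_self, Units.val_one, Int.cast_one]
    simp only [Equiv.coe_mulRight, Equiv.Perm.mul_apply, hprod, Equiv.Perm.sign_mul,
      Units.val_mul, Int.cast_mul, Matrix.transpose_apply]
    linear_combination ((ρ.sign : ℤ) : R) * (∏ k, A k (ρ k)) * hsign
  rw [sum_congr rfl fun σ _ => inner σ, sum_const, card_univ, Fintype.card_perm, nsmul_eq_mul]

end Algebra

theorem integral_det_mul_det_eq_factorial_mul_det_integral {ι Ω 𝕜 : Type*} [Fintype ι]
    [DecidableEq ι] [RCLike 𝕜] [MeasurableSpace Ω] (μ : Measure Ω) [SigmaFinite μ]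
    (f g : ι → Ω → 𝕜) (hfg : ∀ i j, Integrable (fun a => f i a * g j a) μ) :
    ∫ x : ι → Ω, (Matrix.of fun i j => f i (x j)).det * (Matrix.of fun i j => g i (x j)).det
        ∂(Measure.pi fun _ => μ) =
      (Fintype.card ι).factorial * (Matrix.of fun i j => ∫ a, f i a * g j a ∂μ).det := by
  have hprod (σ τ : Equiv.Perm ι) :
      Integrable (fun x : ι → Ω => ∏ j, f (σ j) (x j) * g (τ j) (x j)) (Measure.pi fun _ => μ) :=
    Integrable.fintype_prod (f := fun j a => f (σ j) a * g (τ j) a) fun j => hfg _ _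
  simp only [Matrix.det_mul_det_eq_sum_sum_sign_prod, Matrix.of_apply]
  rw [integral_finsetSum _ fun σ _ => integrable_finsetSum _ fun τ _ => (hprod σ τ).const_mul _,
    ← Matrix.sum_sum_sign_prod_eq_factorial_mul_det]
  refine sum_congr rfl fun σ _ => ?_
  rw [integral_finsetSum _ fun τ _ => (hprod σ τ).const_mul _]
  refine sum_congr rfl fun τ _ => ?_
  rw [integral_const_mul, integral_fintype_prod_eq_prod (fun j a => f (σ j) a * g (τ j) a)]
  rfl

theorem stmt_2_general {Ω : Type*} [MeasurableSpace Ω] (μ : Measure Ω) [IsProbabilityMeasure μ]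
    (N : ℕ) (s : Fin N → Ω → ℂ)
    (hL2 : ∀ i, MemLp (s i) 2 μ) :
    ((∫ x : Fin N → Ω, ‖Matrix.det (Matrix.of fun i j => s i (x j))‖ ^ 2
        ∂(Measure.pi fun _ => μ) : ℝ) : ℂ) =
      (Nat.factorial N : ℂ) *
        Matrix.det (Matrix.of fun i j => ∫ a, s i a * (starRingEnd ℂ) (s j a) ∂μ) := by
  have hnorm_sq (x : Fin N → Ω) : ((‖(Matrix.of fun i j => s i (x j)).det‖ ^ 2 : ℝ) : ℂ) =
      (Matrix.of fun i j => s i (x j)).det *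
        (Matrix.of fun i j => (starRingEnd ℂ) (s i (x j))).det := by
    rw [Complex.ofReal_pow, ← Complex.mul_conj', RingHom.map_det]
    rfl
  rw [← integral_complex_ofReal, integral_congr_ae (.of_forall hnorm_sq),
    integral_det_mul_det_eq_factorial_mul_det_integral μ s (fun i a => (starRingEnd ℂ) (s i a))
      fun i j => (hL2 i).integrable_mul (hL2 j).star, Fintype.card_fin]

/-- For square-integrable functions `s₁, …, s_N ∈ L²(μ)` on a probability space,
`∫_{Ω^N} |det(sᵢ(xⱼ))|² dμ(x₁)⋯dμ(x_N) = N! · det(⟨sᵢ, sⱼ⟩_{L²(μ)})`. -/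
theorem stmt_2 {Ω : Type*} [MeasurableSpace Ω] (μ : Measure Ω) [IsProbabilityMeasure μ]
    (N : ℕ) (s : Fin N → Ω → ℂ)
    (hmeas : ∀ i, Measurable (s i))
    (hL2 : ∀ i, MemLp (s i) 2 μ) :
    ((∫ x : Fin N → Ω, ‖Matrix.det (Matrix.of fun i j => s i (x j))‖ ^ 2
        ∂(Measure.pi fun _ => μ) : ℝ) : ℂ) =
      (Nat.factorial N : ℂ) *
        Matrix.det (Matrix.of fun i j => ∫ a, s i a * (starRingEnd ℂ) (s j a) ∂μ) :=
  stmt_2_general μ N s hL2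
end

section
/- Let $\mu$ be a probability measure on a measurable space, $V$ an $N$-dimensional subspace of $L^2(\mu, \mathbb{C})$ with orthonormal basis $s_1,\dots,s_N$. Then $\int |\det(s_i(x_j))_{i,j}|^2 \, d\mu^{\otimes N}(x_1,\dots,x_N) = N!$. -/
/-!
Expanding both determinants, `|det (sᵢ(xⱼ))|²` is a signed double sum over permutations `σ, τ`
of `∏ⱼ s_{σ j}(xⱼ) · conj s_{τ j}(xⱼ)`. Under the product measure each such product integrates to
`∏ⱼ ⟨s_{σ j}, s_{τ j}⟩`, which by orthonormality is `1` if `σ = τ` and `0` otherwise. Only the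
diagonal survives, contributing `sign σ ^ 2 = 1` for each of the `N!` permutations.
-/

open MeasureTheory

section

open Finset Equiv
open scoped ComplexConjugate

variable {Ω ι : Type*} [MeasurableSpace Ω] {μ : Measure Ω}

theorem MeasureTheory.MemLp.integrable_mul_conj {f g : Ω → ℂ} (hf : MemLp f 2 μ)
    (hg : MemLp g 2 μ) : Integrable (fun a => f a * conj (g a)) μ :=
  hf.integrable_mul (p := 2) (q := 2) hg.star

theorem Complex.re_mul_conj (z : ℂ) : (z * conj z).re = ‖z‖ ^ 2 := by
  rw [Complex.mul_conj']
  norm_cast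

theorem Equiv.Perm.prod_ite_apply_eq_apply {R : Type*} [CommMonoidWithZero R] [Fintype ι]
    [DecidableEq ι] (σ τ : Perm ι) :
    ∏ j, (if σ j = τ j then 1 else 0 : R) = if σ = τ then 1 else 0 := by
  by_cases h : σ = τ
  · simp [h]
  · obtain ⟨j, hj⟩ : ∃ j, σ j ≠ τ j := by simpa [Equiv.ext_iff] using h
    rw [if_neg h]
    exact prod_eq_zero (mem_univ j) (if_neg hj)

theorem Matrix.det_mul_conj_det [Fintype ι] [DecidableEq ι] (A : Matrix ι ι ℂ) :
    A.det * conj A.det = ∑ σ : Perm ι, ∑ τ : Perm ι,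
      ((Perm.sign σ * Perm.sign τ : ℤˣ) : ℂ) * ∏ j, A (σ j) j * conj (A (τ j) j) := by
  simp only [det_apply', map_sum, sum_mul_sum, map_mul, map_prod, map_intCast, prod_mul_distrib,
    Units.val_mul, Int.cast_mul]
  exact sum_congr rfl fun σ _ => sum_congr rfl fun τ _ => by ring

theorem integral_pi_prod_mul_conj_perm [Fintype ι] [DecidableEq ι] [SigmaFinite μ]
    {s : ι → Ω → ℂ} (hON : ∀ i j, ∫ a, s i a * conj (s j a) ∂μ = if i = j then 1 else 0)
    (σ τ : Perm ι) :
    ∫ x : ι → Ω, ∏ j, s (σ j) (x j) * conj (s (τ j) (x j)) ∂(Measure.pi fun _ => μ) =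
      if σ = τ then 1 else 0 := by
  rw [integral_fintype_prod_eq_prod (fun j a => s (σ j) a * conj (s (τ j) a))]
  simp only [hON, Perm.prod_ite_apply_eq_apply]

theorem integral_norm_det_sq_of_orthonormal [Fintype ι] [DecidableEq ι] [SigmaFinite μ]
    {s : ι → Ω → ℂ} (hL2 : ∀ i, MemLp (s i) 2 μ)
    (hON : ∀ i j, ∫ a, s i a * conj (s j a) ∂μ = if i = j then 1 else 0) :
    ∫ x : ι → Ω, ‖(Matrix.of fun i j => s i (x j)).det‖ ^ 2 ∂(Measure.pi fun _ => μ) =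
      (Fintype.card ι).factorial := by
  have hterm : ∀ σ τ : Perm ι, Integrable (fun x : ι → Ω =>
      ((Perm.sign σ * Perm.sign τ : ℤˣ) : ℂ) * ∏ j, s (σ j) (x j) * conj (s (τ j) (x j)))
      (Measure.pi fun _ => μ) := fun σ τ =>
    (Integrable.fintype_prod fun j => (hL2 (σ j)).integrable_mul_conj (hL2 (τ j))).const_mul _
  have hsum := integrable_finsetSum univ fun σ _ => integrable_finsetSum univ fun τ _ => hterm σ τ
  simp_rw [← Complex.re_mul_conj, Matrix.det_mul_conj_det, Matrix.of_apply]
  refine (integral_re hsum).trans ?_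
  rw [integral_finsetSum _ fun σ _ => integrable_finsetSum _ fun τ _ => hterm σ τ]
  simp_rw [integral_finsetSum _ fun τ _ => hterm _ τ, integral_const_mul,
    integral_pi_prod_mul_conj_perm hON, mul_ite, mul_zero, sum_ite_eq, mem_univ, if_true,
    Int.units_mul_self, mul_one]
  simp [Fintype.card_perm]

end

theorem stmt_3_general {Ω : Type*} [MeasurableSpace Ω] (μ : Measure Ω) [IsProbabilityMeasure μ]
    (N : ℕ) (s : Fin N → Ω → ℂ)
    (hL2 : ∀ i, MemLp (s i) 2 μ)
    (hON : ∀ i j, ∫ a, s i a * (starRingEnd ℂ) (s j a) ∂μ = if i = j then 1 else 0) :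
    ∫ x : Fin N → Ω, ‖Matrix.det (Matrix.of fun i j => s i (x j))‖ ^ 2
        ∂(Measure.pi fun _ => μ) = (Nat.factorial N : ℝ) := by
  rw [integral_norm_det_sq_of_orthonormal hL2 hON, Fintype.card_fin]

/-- If `s₁, …, s_N` is an orthonormal family in `L²(μ,ℂ)` for a probability measure `μ`, then
`∫ |det(sᵢ(xⱼ))|² dμ^{⊗N} = N!`. -/
theorem stmt_3 {Ω : Type*} [MeasurableSpace Ω] (μ : Measure Ω) [IsProbabilityMeasure μ]
    (N : ℕ) (s : Fin N → Ω → ℂ)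
    (hmeas : ∀ i, Measurable (s i))
    (hL2 : ∀ i, MemLp (s i) 2 μ)
    (hON : ∀ i j, ∫ a, s i a * (starRingEnd ℂ) (s j a) ∂μ = if i = j then 1 else 0) :
    ∫ x : Fin N → Ω, ‖Matrix.det (Matrix.of fun i j => s i (x j))‖ ^ 2
        ∂(Measure.pi fun _ => μ) = (Nat.factorial N : ℝ) :=
  stmt_3_general μ N s hL2 hON
end

section
/- Let $\mu$ be a probability measure, $V \subset L^2(\mu,\mathbb{C})$ a finite-dimensional subspace of functions, and suppose there is a constant $M \ge 1$ such that $\sup_x |s(x)|^2 \le M \int |s|^2 d\mu$ for all $s \in V$ (Bernstein–Markov type inequality), where the sup is over the support of $\mu$. If $S = (s_1,\dots,s_N)$ is any tuple in $V$, then $\sup_{(x_1,\dots,x_N)} |\det(s_i(x_j))|^2 \le M^N \int |\det(s_i(x_j))|^2 \, d\mu^{\otimes N}$. -/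
open MeasureTheory Finset

/-!
With all points but `x j` fixed, the determinant is a linear combination of the `s i` evaluated
at `x j` (expansion along column `j`), hence a function of `x j` lying in `V`. The
Bernstein–Markov inequality therefore bounds `|det|²` at `x` by `M` times its `μ`-integral in the
`j`-th variable. Doing this for each of the `N` variables in turn, by induction over iterated
marginal integrals, yields the factor `M ^ N` and the integral against `μ^⊗N`.
-/

theorem Submodule.linearMap_comp_eval_mem {ι Ω R : Type*} [CommSemiring R] [Fintype ι]
    [DecidableEq ι] (V : Submodule R (Ω → R)) (L : (ι → R) →ₗ[R] R) {s : ι → Ω → R}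
    (hs : ∀ i, s i ∈ V) : (fun y => L fun i => s i y) ∈ V := by
  have : (fun y => L fun i => s i y) = ∑ i, L (fun j => if i = j then 1 else 0) • s i := by
    ext y
    simp [L.pi_apply_eq_sum_univ (fun i => s i y), mul_comm]
  exact this ▸ V.sum_mem fun i _ => V.smul_mem _ (hs i)

theorem Matrix.det_of_update_mem {n Ω R : Type*} [CommRing R] [Fintype n] [DecidableEq n]
    (V : Submodule R (Ω → R)) {s : n → Ω → R} (hs : ∀ i, s i ∈ V) (x : n → Ω) (j : n) :
    (fun y => (of fun i k => s i (Function.update x j y k)).det) ∈ V := by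
  convert V.linearMap_comp_eval_mem (LinearMap.proj j ∘ₗ cramer (of fun i k => s i (x k))) hs
    using 2 with y
  simp only [LinearMap.comp_apply, LinearMap.proj_apply, cramer_apply]
  congr 1
  ext i k
  simp only [of_apply, updateCol_apply, Function.update_apply]
  split_ifs <;> rfl

theorem Matrix.measurable_det_of {n Ω : Type*} [Fintype n] [DecidableEq n] [MeasurableSpace Ω]
    {s : n → Ω → ℂ} (hs : ∀ i, Measurable (s i)) :
    Measurable fun x : n → Ω => (Matrix.of fun i j => s i (x j)).det := by
  simp_rw [Matrix.det_apply]
  fun_prop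

theorem Matrix.exists_norm_det_of_le {n Ω 𝕜 : Type*} [Fintype n] [DecidableEq n] [NormedField 𝕜]
    {s : n → Ω → 𝕜} (hs : ∀ i, ∃ B, ∀ y, ‖s i y‖ ≤ B) :
    ∃ C, ∀ x : n → Ω, ‖(of fun i j => s i (x j)).det‖ ≤ C := by
  choose B hB using hs
  obtain ⟨B₀, hB₀⟩ := Finite.exists_le B
  exact ⟨_, fun x => det_le (abv := NormedField.toAbsoluteValue 𝕜)
    fun i j => (hB i (x j)).trans (hB₀ i)⟩

theorem ofReal_le_mul_lintegral_of_le_mul_integral {Ω : Type*} [MeasurableSpace Ω]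
    {μ : Measure Ω} {g : Ω → ℝ} (hg : AEStronglyMeasurable g μ) (hg0 : ∀ a, 0 ≤ g a) {M : ℝ}
    {x : Ω} (h : g x ≤ M * ∫ a, g a ∂μ) :
    ENNReal.ofReal (g x) ≤ ENNReal.ofReal M * ∫⁻ a, ENNReal.ofReal (g a) ∂μ :=
  calc ENNReal.ofReal (g x) ≤ ENNReal.ofReal (M * ∫ a, g a ∂μ) := ENNReal.ofReal_le_ofReal h
    _ = ENNReal.ofReal M * ENNReal.ofReal (∫ a, g a ∂μ) :=
        ENNReal.ofReal_mul' (integral_nonneg hg0)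
    _ ≤ ENNReal.ofReal M * ∫⁻ a, ENNReal.ofReal (g a) ∂μ := by
        rw [integral_eq_lintegral_of_nonneg_ae (.of_forall hg0) hg]
        gcongr
        exact ENNReal.ofReal_toReal_le

section Marginal

variable {ι : Type*} [DecidableEq ι] {X : ι → Type*} [∀ i, MeasurableSpace (X i)]
  {μ : ∀ i, Measure (X i)} [∀ i, SigmaFinite (μ i)] {G : (∀ i, X i) → ENNReal} {C : ENNReal}

theorem le_pow_card_mul_lmarginal (hG : Measurable G)
    (h : ∀ x j, G x ≤ C * ∫⁻ y, G (Function.update x j y) ∂μ j) (T : Finset ι) (x : ∀ i, X i) :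
    G x ≤ C ^ #T * (∫⋯∫⁻_T, G ∂μ) x := by
  induction T using Finset.induction_on generalizing x with
  | empty => simp
  | @insert j T hj ih =>
    calc G x ≤ C * ∫⁻ y, G (Function.update x j y) ∂μ j := h x j
      _ ≤ C * ∫⁻ y, C ^ #T * (∫⋯∫⁻_T, G ∂μ) (Function.update x j y) ∂μ j := by
          gcongr with y
          exact ih _
      _ = C ^ #(insert j T) * (∫⋯∫⁻_insert j T, G ∂μ) x := by
          have hmeas : Measurable fun y => (∫⋯∫⁻_T, G ∂μ) (Function.update x j y) :=
            (hG.lmarginal μ).comp (measurable_update x)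
          rw [lintegral_const_mul _ hmeas,
            lmarginal_insert _ hG hj, card_insert_of_notMem hj, pow_succ, mul_comm _ C, mul_assoc]

theorem le_pow_card_mul_lintegral_pi [Fintype ι] (hG : Measurable G)
    (h : ∀ x j, G x ≤ C * ∫⁻ y, G (Function.update x j y) ∂μ j) (x : ∀ i, X i) :
    G x ≤ C ^ Fintype.card ι * ∫⁻ y, G y ∂Measure.pi μ := by
  simpa using le_pow_card_mul_lmarginal hG h univ x

end Marginal

theorem le_mul_integral_of_ofReal_le_mul_lintegral {Ω : Type*} [MeasurableSpace Ω]
    {μ : Measure Ω} {g : Ω → ℝ} (hg : Integrable g μ) (hg0 : ∀ a, 0 ≤ g a) {c a : ℝ}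
    (hc : 0 ≤ c) (h : ENNReal.ofReal a ≤ ENNReal.ofReal c * ∫⁻ x, ENNReal.ofReal (g x) ∂μ) :
    a ≤ c * ∫ x, g x ∂μ := by
  rw [← ofReal_integral_eq_lintegral_ofReal hg (.of_forall hg0), ← ENNReal.ofReal_mul hc] at h
  exact (ENNReal.ofReal_le_ofReal_iff (mul_nonneg hc (integral_nonneg hg0))).mp h

theorem stmt_4_general {Ω : Type*} [MeasurableSpace Ω] (μ : Measure Ω) [IsProbabilityMeasure μ]
    (V : Submodule ℂ (Ω → ℂ))
    (hVmeas : ∀ f ∈ V, Measurable f)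
    (M : ℝ) (hM : 1 ≤ M)
    (hBM : ∀ f ∈ V, ∀ x, ‖f x‖ ^ 2 ≤ M * ∫ a, ‖f a‖ ^ 2 ∂μ)
    (N : ℕ) (s : Fin N → Ω → ℂ) (hs : ∀ i, s i ∈ V) :
    ∀ x : Fin N → Ω, ‖Matrix.det (Matrix.of fun i j => s i (x j))‖ ^ 2 ≤
      M ^ N * ∫ y : Fin N → Ω, ‖Matrix.det (Matrix.of fun i j => s i (y j))‖ ^ 2
        ∂(Measure.pi fun _ => μ) := by
  intro x
  have hM0 : 0 ≤ M := zero_le_one.trans hM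
  have hdet := Matrix.measurable_det_of fun i => hVmeas _ (hs i)
  have hcol : ∀ (y : Fin N → Ω) j,
      ENNReal.ofReal (‖(Matrix.of fun i k => s i (y k)).det‖ ^ 2) ≤
        ENNReal.ofReal M * ∫⁻ z,
          ENNReal.ofReal (‖(Matrix.of fun i k => s i (Function.update y j z k)).det‖ ^ 2) ∂μ := by
    intro y j
    have hf := Matrix.det_of_update_mem V hs y j
    simpa using ofReal_le_mul_lintegral_of_le_mul_integral
      ((hVmeas _ hf).norm.pow_const 2).aestronglyMeasurable (fun _ => by positivity)
      (hBM _ hf (y j))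
  -- `hBM` already bounds every element of `V` by a constant.
  obtain ⟨C, hC⟩ := Matrix.exists_norm_det_of_le fun i =>
    ⟨_, fun y => Real.le_sqrt_of_sq_le (hBM _ (hs i) y)⟩
  have hint : Integrable (fun y : Fin N → Ω => ‖(Matrix.of fun i j => s i (y j)).det‖ ^ 2)
      (Measure.pi fun _ => μ) :=
    .of_bound (hdet.norm.pow_const 2).aestronglyMeasurable (C ^ 2) (.of_forall fun y => by
      simpa using pow_le_pow_left₀ (norm_nonneg _) (hC y) 2)
  have key := le_pow_card_mul_lintegral_pi (hdet.norm.pow_const 2).ennreal_ofReal hcol x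
  rw [Fintype.card_fin, ← ENNReal.ofReal_pow hM0] at key
  exact le_mul_integral_of_ofReal_le_mul_lintegral hint (fun _ => by positivity)
    (pow_nonneg hM0 N) key

/-- Bernstein–Markov for determinants: if every `f` in a finite-dimensional space `V` of bounded
measurable functions satisfies `sup |f|² ≤ M ∫ |f|² dμ`, then for any tuple `s₁,…,s_N ∈ V`,
`sup_{K^N} |det(sᵢ(xⱼ))|² ≤ M^N ∫ |det(sᵢ(xⱼ))|² dμ^{⊗N}`. -/
theorem stmt_4 {Ω : Type*} [MeasurableSpace Ω] (μ : Measure Ω) [IsProbabilityMeasure μ]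
    (V : Submodule ℂ (Ω → ℂ)) [FiniteDimensional ℂ V]
    (hVmeas : ∀ f ∈ V, Measurable f)
    (hVbdd : ∀ f ∈ V, ∃ B : ℝ, ∀ x, ‖f x‖ ≤ B)
    (M : ℝ) (hM : 1 ≤ M)
    (hBM : ∀ f ∈ V, ∀ x, ‖f x‖ ^ 2 ≤ M * ∫ a, ‖f a‖ ^ 2 ∂μ)
    (N : ℕ) (s : Fin N → Ω → ℂ) (hs : ∀ i, s i ∈ V) :
    ∀ x : Fin N → Ω, ‖Matrix.det (Matrix.of fun i j => s i (x j))‖ ^ 2 ≤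
      M ^ N * ∫ y : Fin N → Ω, ‖Matrix.det (Matrix.of fun i j => s i (y j))‖ ^ 2
        ∂(Measure.pi fun _ => μ) :=
  stmt_4_general μ V hVmeas M hM hBM N s hs
end

section
/- Let $\mu$ be a probability measure on a compact space $K$, let $\phi, v$ be bounded measurable real functions on $K$, and for each $t \in \mathbb{R}$ consider on a fixed $N$-dimensional space $V$ of bounded measurable complex functions the Hermitian inner products $\langle f, g \rangle_t = \int_K f \bar{g}\, e^{-2(\phi + t v)} d\mu$. Fix an orthonormal basis $(s_j)$ of $V$ for $\langle \cdot,\cdot \rangle_0$ and let $H(t)$ be the Gram matrix $H(t)_{ij} = \langle s_i, s_j \rangle_t$. Then $\frac{d}{dt}\Big|_{t=0} \log \det H(t) = -2 \int_K v \, \rho \, d\mu$, where $\rho(x) = \sum_j |s_j(x)|^2 e^{-2\phi(x)}$. -/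
/-!
By Jacobi's formula, at a point where `H(0) = 1` the derivative of `det H` is the trace of `H'(0)`.
Differentiating under the integral sign (everything is bounded and `μ` is finite),
`H'(0)ᵢᵢ = -2 ∫ v |sᵢ|² e^{-2φ} dμ`, and summing over `i` gives `-2 ∫ v ρ dμ`. Since `det H(0) = 1`,
the logarithm contributes no further factor.
-/

open MeasureTheory

theorem Equiv.Perm.exists_ne_apply_ne_of_ne_one {α : Type*} [Fintype α] [DecidableEq α]
    {σ : Equiv.Perm α} (hσ : σ ≠ 1) (i : α) : ∃ j, j ≠ i ∧ σ j ≠ j := by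
  obtain ⟨j, hj, hji⟩ := Finset.exists_mem_ne (Equiv.Perm.one_lt_card_support_of_ne_one hσ) i
  exact ⟨j, hji, Equiv.Perm.mem_support.1 hj⟩

theorem Matrix.hasDerivAt_det_of_eq_one {𝕜 R n : Type*} [NontriviallyNormedField 𝕜]
    [NormedCommRing R] [NormedAlgebra 𝕜 R] [Fintype n] [DecidableEq n]
    {H : 𝕜 → Matrix n n R} {D : Matrix n n R} {x : 𝕜}
    (hH : ∀ i j, HasDerivAt (fun t => H t i j) (D i j) x) (h1 : H x = 1) :
    HasDerivAt (fun t => (H t).det) D.trace x := by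
  simp_rw [Matrix.det_apply']
  refine (HasDerivAt.fun_sum fun σ _ => (HasDerivAt.fun_finsetProd fun i _ =>
    hH (σ i) i).const_mul (Equiv.Perm.sign σ : R)).congr_deriv ?_
  rw [Finset.sum_eq_single_of_mem 1 (Finset.mem_univ _)]
  · simp [Matrix.trace, h1]
  · -- for `σ ≠ 1`, every term of the product rule keeps an off-diagonal factor of `H x = 1`
    intro σ _ hσ
    suffices ∀ i, ∏ j ∈ Finset.univ.erase i, H x (σ j) j = 0 by simp [this]
    intro i
    obtain ⟨j, hji, hσj⟩ := σ.exists_ne_apply_ne_of_ne_one hσ i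
    exact Finset.prod_eq_zero (Finset.mem_erase.2 ⟨hji, Finset.mem_univ j⟩)
      (by simp [h1, Matrix.one_apply_ne hσj])

theorem Matrix.hasDerivAt_log_re_det_of_eq_one {n : Type*} [Fintype n] [DecidableEq n]
    {H : ℝ → Matrix n n ℂ} {D : Matrix n n ℂ} {x : ℝ}
    (hH : ∀ i j, HasDerivAt (fun t => H t i j) (D i j) x) (h1 : H x = 1) :
    HasDerivAt (fun t => Real.log (H t).det.re) D.trace.re x := by
  have hre := Complex.reCLM.hasFDerivAt.comp_hasDerivAt x (Matrix.hasDerivAt_det_of_eq_one hH h1)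
  simpa [h1] using hre.log (by simp [h1])

section WeightedIntegral

variable {K : Type*} [MeasurableSpace K] {μ : Measure K} [IsFiniteMeasure μ]

theorem hasDerivAt_integral_mul_exp {f : K → ℂ} {g v : K → ℝ} {Cf Cg Cv : ℝ}
    (hf : AEStronglyMeasurable f μ) (hfb : ∀ a, ‖f a‖ ≤ Cf)
    (hg : Measurable g) (hgb : ∀ a, g a ≤ Cg) (hv : Measurable v) (hvb : ∀ a, |v a| ≤ Cv)
    (t₀ : ℝ) :
    Integrable (fun a => f a * ↑(Real.exp (g a + t₀ * v a) * v a)) μ ∧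
      HasDerivAt (fun t => ∫ a, f a * ↑(Real.exp (g a + t * v a)) ∂μ)
        (∫ a, f a * ↑(Real.exp (g a + t₀ * v a) * v a) ∂μ) t₀ := by
  set M := Cg + (|t₀| + 1) * Cv
  have hexp : ∀ a, ∀ t ∈ Metric.ball t₀ 1, Real.exp (g a + t * v a) ≤ Real.exp M := by
    intro a t ht
    have ht' : |t| ≤ |t₀| + 1 := by
      have := abs_sub_abs_le_abs_sub t t₀
      rw [Metric.mem_ball, Real.dist_eq] at ht
      linarith
    have htv : t * v a ≤ (|t₀| + 1) * Cv :=
      calc t * v a ≤ |t| * |v a| := (le_abs_self _).trans (abs_mul t (v a)).le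
        _ ≤ (|t₀| + 1) * Cv := mul_le_mul ht' (hvb a) (abs_nonneg _) (by positivity)
    exact Real.exp_le_exp.2 (by linarith [hgb a])
  have hmeas : ∀ w : K → ℝ, Measurable w → AEStronglyMeasurable (fun a => f a * ↑(w a)) μ :=
    fun w hw => hf.mul (by fun_prop : Measurable fun a => (w a : ℂ)).aestronglyMeasurable
  refine hasDerivAt_integral_of_dominated_loc_of_deriv_le
    (F := fun t a => f a * ↑(Real.exp (g a + t * v a)))
    (F' := fun t a => f a * ↑(Real.exp (g a + t * v a) * v a))
    (bound := fun _ => Cf * (Real.exp M * Cv)) (Metric.ball_mem_nhds t₀ one_pos)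
    (.of_forall fun t => hmeas (fun a => Real.exp (g a + t * v a)) (by fun_prop)) ?_
    (hmeas (fun a => Real.exp (g a + t₀ * v a) * v a) (by fun_prop))
    (ae_of_all _ fun a t ht => ?_) (integrable_const _) (ae_of_all _ fun a t _ => ?_)
  · refine .of_bound (hmeas (fun a => Real.exp (g a + t₀ * v a)) (by fun_prop)) (Cf * Real.exp M)
      (ae_of_all _ fun a => ?_)
    rw [norm_mul, Complex.norm_real, Real.norm_of_nonneg (Real.exp_pos _).le]
    exact mul_le_mul (hfb a) (hexp a t₀ (Metric.mem_ball_self one_pos)) (by positivity)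
      ((norm_nonneg _).trans (hfb a))
  · rw [norm_mul, Complex.norm_real, Real.norm_eq_abs, abs_mul, Real.abs_exp]
    exact mul_le_mul (hfb a) (mul_le_mul (hexp a t ht) (hvb a) (abs_nonneg _) (by positivity))
      (by positivity) ((norm_nonneg _).trans (hfb a))
  · have hlin : HasDerivAt (fun t => g a + t * v a) (v a) t :=
      (hasDerivAt_mul_const (v a)).const_add (g a)
    exact hlin.exp.ofReal_comp.const_mul (f a)

theorem hasDerivAt_integral_mul_conj_mul_exp {p q : K → ℂ} {φ v : K → ℝ} {Cp Cq Cφ Cv : ℝ}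
    (hp : AEStronglyMeasurable p μ) (hpb : ∀ a, ‖p a‖ ≤ Cp)
    (hq : AEStronglyMeasurable q μ) (hqb : ∀ a, ‖q a‖ ≤ Cq)
    (hφ : Measurable φ) (hφb : ∀ a, |φ a| ≤ Cφ) (hv : Measurable v) (hvb : ∀ a, |v a| ≤ Cv)
    (t₀ : ℝ) :
    Integrable (fun a => p a * starRingEnd ℂ (q a) *
        ↑(Real.exp (-2 * (φ a + t₀ * v a)) * (-2 * v a))) μ ∧
      HasDerivAt (fun t => ∫ a, p a * starRingEnd ℂ (q a) * ↑(Real.exp (-2 * (φ a + t * v a))) ∂μ)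
        (∫ a, p a * starRingEnd ℂ (q a) *
          ↑(Real.exp (-2 * (φ a + t₀ * v a)) * (-2 * v a)) ∂μ) t₀ := by
  have hpq : AEStronglyMeasurable (fun a => p a * starRingEnd ℂ (q a)) μ :=
    hp.mul (Complex.continuous_conj.comp_aestronglyMeasurable hq)
  have hpqb : ∀ a, ‖p a * starRingEnd ℂ (q a)‖ ≤ Cp * Cq := fun a => by
    rw [norm_mul, RCLike.norm_conj]
    exact mul_le_mul (hpb a) (hqb a) (norm_nonneg _) ((norm_nonneg _).trans (hpb a))
  have key := hasDerivAt_integral_mul_exp (Cg := 2 * Cφ) (Cv := 2 * Cv) hpq hpqb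
    (hφ.const_mul (-2)) (fun a => by linarith [(abs_le.1 (hφb a)).1]) (hv.const_mul (-2))
    (fun a => by rw [abs_mul, abs_neg, abs_two]; linarith [hvb a]) t₀
  have hexp : ∀ t a, -2 * (φ a + t * v a) = -2 * φ a + t * (-2 * v a) := fun t a => by ring
  simpa only [hexp] using key

end WeightedIntegral

noncomputable def weightedGram {K ι : Type*} [MeasurableSpace K] (μ : Measure K)
    (s : ι → K → ℂ) (w : K → ℝ) : Matrix ι ι ℂ :=
  Matrix.of fun i j => ∫ a, s i a * starRingEnd ℂ (s j a) * ↑(w a) ∂μ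

theorem weightedGram_trace {K ι : Type*} [MeasurableSpace K] [Fintype ι] {μ : Measure K}
    {s : ι → K → ℂ} {w : K → ℝ}
    (hint : ∀ i, Integrable (fun a => s i a * starRingEnd ℂ (s i a) * ↑(w a)) μ) :
    (weightedGram μ s w).trace = ↑(∫ a, (∑ i, ‖s i a‖ ^ 2) * w a ∂μ) := by
  rw [← integral_complex_ofReal, Matrix.trace]
  simp only [Matrix.diag, weightedGram, Matrix.of_apply]
  rw [← integral_finsetSum _ fun i _ => hint i]
  congr 1
  funext a
  simp only [Complex.mul_conj', Finset.sum_mul]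
  push_cast
  rfl

/-- Derivative of the log-determinant of the Gram matrix of a fixed `L²(e^{-2φ}dμ)`-orthonormal
family with respect to a perturbation `φ + t·v` of the weight:
`d/dt|₀ log det H(t) = -2 ∫ v ρ dμ`, where `H(t)ᵢⱼ = ∫ sᵢ s̄ⱼ e^{-2(φ+tv)} dμ` and
`ρ(x) = ∑ⱼ |sⱼ(x)|² e^{-2φ(x)}`. -/
theorem stmt_18 {K : Type*} [MeasurableSpace K] (μ : Measure K) [IsProbabilityMeasure μ]
    (φ v : K → ℝ) (hφm : Measurable φ) (hvm : Measurable v)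
    (hφb : ∃ A : ℝ, ∀ x, |φ x| ≤ A) (hvb : ∃ A : ℝ, ∀ x, |v x| ≤ A)
    (N : ℕ) (s : Fin N → K → ℂ)
    (hsm : ∀ i, Measurable (s i)) (hsb : ∀ i, ∃ A : ℝ, ∀ x, ‖s i x‖ ≤ A)
    (hON : ∀ i j, (∫ a, s i a * (starRingEnd ℂ) (s j a) *
        Complex.ofReal (Real.exp (-2 * φ a)) ∂μ) = if i = j then 1 else 0) :
    HasDerivAt (fun t : ℝ => Real.log
        (Matrix.det (Matrix.of fun i j : Fin N => ∫ a, s i a * (starRingEnd ℂ) (s j a) *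
          Complex.ofReal (Real.exp (-2 * (φ a + t * v a))) ∂μ)).re)
      (-2 * ∫ a, v a * ((∑ j, ‖s j a‖ ^ 2) * Real.exp (-2 * φ a)) ∂μ) 0 := by
  obtain ⟨Cφ, hCφ⟩ := hφb
  obtain ⟨Cv, hCv⟩ := hvb
  choose Cs hCs using hsb
  have hH0 : weightedGram μ s (fun a => Real.exp (-2 * (φ a + 0 * v a))) = 1 := by
    ext i j
    simpa [weightedGram, Matrix.one_apply] using hON i j
  have hentry i j := hasDerivAt_integral_mul_conj_mul_exp (μ := μ)
    (hsm i).aestronglyMeasurable (hCs i) (hsm j).aestronglyMeasurable (hCs j) hφm hCφ hvm hCv 0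
  have hlog := Matrix.hasDerivAt_log_re_det_of_eq_one
    (H := fun t => weightedGram μ s fun a => Real.exp (-2 * (φ a + t * v a)))
    (D := weightedGram μ s fun a => Real.exp (-2 * (φ a + 0 * v a)) * (-2 * v a))
    (fun i j => (hentry i j).2) hH0
  rw [weightedGram_trace fun i => (hentry i i).1, Complex.ofReal_re] at hlog
  refine hlog.congr_deriv ?_
  rw [← integral_const_mul]
  congr 1
  funext a
  simp only [zero_mul, add_zero]
  ring
end
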